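/- For all integers j ≥ 1 and k ≥ 1, the point (ζ₂, 2, −1) belongs both to K + (−w₋(j)) and to K + (w₊(k) + w₊(k+1) − u₁). -/

import Mathlib

open Pointwise

/-- `w₋(j) = (0, −∑_{t=1}^{j} 1/t², ∑_{t=1}^{j} 1/t³)`. -/
noncomputable def wM (j : ℕ) : Fin 3 → ℝ :=
  ![0, -(∑ t ∈ Finset.Icc 1 j, (1 : ℝ) / (t : ℝ) ^ 2),
    ∑ t ∈ Finset.Icc 1 j, (1 : ℝ) / (t : ℝ) ^ 3]

/-- `w₊(k) = (∑_{t=1}^{k} 1/t², ∑_{t=1}^{k} 1/t³, 0)`. -/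
noncomputable def wP (k : ℕ) : Fin 3 → ℝ :=
  ![∑ t ∈ Finset.Icc 1 k, (1 : ℝ) / (t : ℝ) ^ 2,
    ∑ t ∈ Finset.Icc 1 k, (1 : ℝ) / (t : ℝ) ^ 3, 0]

/-- `ζ₂ = ∑_{t=1}^{∞} 1/t²`. -/
noncomputable def zeta2 : ℝ := ∑' t : ℕ, (1 : ℝ) / ((t : ℝ) + 1) ^ 2

/-- `ζ₃ = ∑_{t=1}^{∞} 1/t³`. -/
noncomputable def zeta3 : ℝ := ∑' t : ℕ, (1 : ℝ) / ((t : ℝ) + 1) ^ 3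

/-- `u₁ = (ζ₂, −2, ζ₃)`. -/
noncomputable def uOne : Fin 3 → ℝ := ![zeta2, -2, zeta3]

/-- `u₀ = (ζ₂, −2, 0)`. -/
noncomputable def uZero : Fin 3 → ℝ := ![zeta2, -2, 0]

/-- `v(j,k) = (1/(j+1)³)·w(j,k) + (((j+1)³ − 1)/(j+1)³)·w(j,k+1)` where
`w(j,k) = w₋(j) + w₊(k)`. -/
noncomputable def vU (j k : ℕ) : Fin 3 → ℝ :=
  ((1 : ℝ) / ((j : ℝ) + 1) ^ 3) • (wM j + wP k) +
    ((((j : ℝ) + 1) ^ 3 - 1) / ((j : ℝ) + 1) ^ 3) • (wM j + wP (k + 1))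

/-- The universal convex body `K`: the closure of the convex hull of the points
`w₋(j)`, `v(j,k)`, `u₀ − w₊(k)` and `u₁ − w₊(k)`. -/
noncomputable def KU : Set (Fin 3 → ℝ) :=
  closure (convexHull ℝ
    (Set.range wM ∪ (⋃ j : ℕ, Set.range (vU j)) ∪
     Set.range (fun k => uZero - wP k) ∪ Set.range (fun k => uOne - wP k)))


/-!
Both memberships are proved by writing the translated point as an explicit convex combination of
points of `K`. Write `S_p(n) = ∑_{t ≤ n} 1/t^p`. For `B_j` the point
`(ζ₂, 2 - S₂(j), S₃(j) - 1)` lies in the triangle spanned by `u₀`, `u₁` and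
`lim_k w₊(k) = (ζ₂, ζ₃, 0)`; this reduces to `(2 + ζ₃) S₃(j) - ζ₃ S₂(j) ≤ ζ₃² - ζ₃ + 2`, and the
left side is largest at `j = 2`. For `C_k` the point is a combination of `0`, `u₀`, `u₀ - w₊(k)`
and `u₁ - w₊(k)`, whose weights are nonnegative by the bounds `ζ₂ < 1.654` (from `ζ₂ = π²/6`)
and `9/8 ≤ ζ₃ < 1.26` (the tail of `ζ₃` after two terms is at most a third of that of `ζ₂`).
-/

open Finset Filter Topology

noncomputable def zetaPartial (p n : ℕ) : ℝ := ∑ t ∈ Icc 1 n, (1 : ℝ) / (t : ℝ) ^ p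

noncomputable def zetaNat (p : ℕ) : ℝ := ∑' t : ℕ, (1 : ℝ) / ((t : ℝ) + 1) ^ p

section ZetaPartial

variable {p : ℕ}

lemma zetaPartial_zero (p : ℕ) : zetaPartial p 0 = 0 := by
  simp [zetaPartial]

lemma zetaPartial_succ (p n : ℕ) :
    zetaPartial p (n + 1) = zetaPartial p n + 1 / ((n : ℝ) + 1) ^ p := by
  rw [zetaPartial, sum_Icc_succ_top (by omega), zetaPartial, Nat.cast_succ]

lemma zetaPartial_two (p : ℕ) : zetaPartial p 2 = 1 + 1 / 2 ^ p := by
  rw [zetaPartial_succ, zetaPartial_succ, zetaPartial_zero]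
  norm_num

lemma zetaPartial_eq_sum_range (p n : ℕ) :
    zetaPartial p n = ∑ t ∈ range n, (1 : ℝ) / ((t : ℝ) + 1) ^ p := by
  induction n with
  | zero => simp [zetaPartial_zero]
  | succ n ih => rw [zetaPartial_succ, ih, sum_range_succ]

lemma zetaPartial_mono (p : ℕ) : Monotone (zetaPartial p) :=
  monotone_nat_of_le_succ fun n => by
    rw [zetaPartial_succ]
    exact le_add_of_nonneg_right (by positivity)

lemma one_le_zetaPartial {n : ℕ} (hn : 1 ≤ n) : 1 ≤ zetaPartial p n := by
  calc (1 : ℝ) = zetaPartial p 1 := by simp [zetaPartial_succ, zetaPartial_zero]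
    _ ≤ zetaPartial p n := zetaPartial_mono p hn

lemma summable_one_div_nat_add_one_pow (hp : 1 < p) :
    Summable fun t : ℕ => (1 : ℝ) / ((t : ℝ) + 1) ^ p := by
  simpa using (summable_nat_add_iff 1).mpr (Real.summable_one_div_nat_pow.mpr hp)

lemma tendsto_zetaPartial (hp : 1 < p) : Tendsto (zetaPartial p) atTop (𝓝 (zetaNat p)) := by
  rw [show zetaPartial p = _ from funext (zetaPartial_eq_sum_range p)]
  exact (summable_one_div_nat_add_one_pow hp).hasSum.tendsto_sum_nat

lemma zetaPartial_le_zetaNat (hp : 1 < p) (n : ℕ) : zetaPartial p n ≤ zetaNat p := by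
  rw [zetaPartial_eq_sum_range]
  exact (summable_one_div_nat_add_one_pow hp).sum_le_tsum _ fun _ _ => by positivity

lemma zetaNat_sub_zetaPartial (hp : 1 < p) (n : ℕ) :
    zetaNat p - zetaPartial p n = ∑' t : ℕ, (1 : ℝ) / ((t : ℝ) + n + 1) ^ p := by
  rw [zetaNat, ← (summable_one_div_nat_add_one_pow hp).sum_add_tsum_nat_add n,
    zetaPartial_eq_sum_range, add_sub_cancel_left]
  push_cast
  exact tsum_congr fun t => by ring

lemma zetaNat_succ_sub_le (hp : 1 < p) (n : ℕ) :
    zetaNat (p + 1) - zetaPartial (p + 1) n ≤ (zetaNat p - zetaPartial p n) / (n + 1) := by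
  have hsum (q : ℕ) (hq : 1 < q) : Summable fun t : ℕ => (1 : ℝ) / ((t : ℝ) + n + 1) ^ q := by
    simpa [add_assoc] using (summable_nat_add_iff n).mpr (summable_one_div_nat_add_one_pow hq)
  rw [zetaNat_sub_zetaPartial hp, zetaNat_sub_zetaPartial (by omega), ← tsum_div_const]
  refine (hsum _ (by omega)).tsum_le_tsum (fun t => ?_) ((hsum p hp).div_const _)
  have hn : (n : ℝ) + 1 ≤ t + n + 1 := by linarith [(t.cast_nonneg : (0 : ℝ) ≤ t)]
  rw [div_div, pow_succ]
  gcongr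

end ZetaPartial

lemma zeta2_eq_pi_sq_div_six : zeta2 = Real.pi ^ 2 / 6 := by
  rw [← hasSum_zeta_two.tsum_eq, hasSum_zeta_two.summable.tsum_eq_zero_add, zeta2]
  simp

lemma zeta2_lt : zeta2 < 1.654 := by
  rw [zeta2_eq_pi_sq_div_six]
  nlinarith [Real.pi_lt_d2, Real.pi_pos]

lemma nine_div_eight_le_zeta3 : 9 / 8 ≤ zeta3 := by
  have := zetaPartial_le_zetaNat (p := 3) (by norm_num) 2
  rw [zetaPartial_two] at this
  exact le_trans (by norm_num) this

lemma zeta3_lt : zeta3 < 1.26 := by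
  have htail := zetaNat_succ_sub_le (p := 2) (by norm_num) 2
  rw [zetaPartial_two, zetaPartial_two] at htail
  have : zetaNat 2 < 1.654 := zeta2_lt
  change zetaNat 3 < _
  linarith

lemma weighted_zetaPartial_le (c : ℝ) (hc₁ : 1 ≤ c) (hc₂ : c ≤ 2) (n : ℕ) :
    (2 + c) * zetaPartial 3 n - c * zetaPartial 2 n
      ≤ (2 + c) * zetaPartial 3 2 - c * zetaPartial 2 2 := by
  rcases lt_or_ge n 2 with hn | hn
  · interval_cases n <;> norm_num [zetaPartial_succ, zetaPartial_zero] <;> linarith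
  -- from `t = 3` on, the increment `((2 + c) - c t) / t³` is nonpositive
  induction n, hn using Nat.le_induction with
  | base => rfl
  | succ n hn ih =>
    have h3 : (3 : ℝ) ≤ n + 1 := by exact_mod_cast Nat.succ_le_succ hn
    have hstep : (2 + c) * (1 / ((n : ℝ) + 1) ^ 3) ≤ c * (1 / ((n : ℝ) + 1) ^ 2) := by
      rw [mul_one_div, mul_one_div, div_le_div_iff₀ (by positivity) (by positivity), pow_succ]
      have : 2 + c ≤ c * (n + 1) := by nlinarith
      nlinarith [pow_pos (by linarith : (0 : ℝ) < n + 1) 2]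
    rw [zetaPartial_succ, zetaPartial_succ]
    linarith

lemma Convex.smul_add_smul_add_smul_mem {𝕜 E : Type*} [Field 𝕜] [LinearOrder 𝕜]
    [IsStrictOrderedRing 𝕜] [AddCommGroup E] [Module 𝕜 E] {s : Set E}
    (hs : Convex 𝕜 s) (h₀ : (0 : E) ∈ s) {x y z : E} (hx : x ∈ s) (hy : y ∈ s) (hz : z ∈ s)
    {a b c : 𝕜} (ha : 0 ≤ a) (hb : 0 ≤ b) (hc : 0 ≤ c) (habc : a + b + c ≤ 1) :
    a • x + b • y + c • z ∈ s := by
  have := hs.sum_mem (t := univ) (w := ![1 - a - b - c, a, b, c]) (z := ![0, x, y, z])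
    (fun i _ => by fin_cases i <;> simp <;> linarith) (by simp [Fin.sum_univ_four]; ring)
    (fun i _ => by fin_cases i <;> simpa)
  simpa [Fin.sum_univ_four, add_assoc] using this

lemma wM_eq (j : ℕ) : wM j = ![0, -zetaPartial 2 j, zetaPartial 3 j] := rfl

lemma wP_eq (k : ℕ) : wP k = ![zetaPartial 2 k, zetaPartial 3 k, 0] := rfl

lemma mem_KU_of_mem_generators {x : Fin 3 → ℝ}
    (hx : x ∈ Set.range wM ∪ (⋃ j : ℕ, Set.range (vU j)) ∪
      Set.range (fun k => uZero - wP k) ∪ Set.range (fun k => uOne - wP k)) :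
    x ∈ KU :=
  subset_closure (subset_convexHull ℝ _ hx)

lemma convex_KU : Convex ℝ KU := (convex_convexHull ℝ _).closure

lemma wM_zero : wM 0 = 0 := by
  ext i; fin_cases i <;> simp [wM_eq, zetaPartial_zero]

lemma wP_zero : wP 0 = 0 := by
  ext i; fin_cases i <;> simp [wP_eq, zetaPartial_zero]

lemma zero_mem_KU : (0 : Fin 3 → ℝ) ∈ KU :=
  wM_zero ▸ mem_KU_of_mem_generators (.inl (.inl (.inl ⟨0, rfl⟩)))

lemma uZero_sub_wP_mem_KU (k : ℕ) : uZero - wP k ∈ KU :=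
  mem_KU_of_mem_generators (.inl (.inr ⟨k, rfl⟩))

lemma uOne_sub_wP_mem_KU (k : ℕ) : uOne - wP k ∈ KU :=
  mem_KU_of_mem_generators (.inr ⟨k, rfl⟩)

lemma uZero_mem_KU : uZero ∈ KU := by
  simpa only [wP_zero, sub_zero] using uZero_sub_wP_mem_KU 0

lemma uOne_mem_KU : uOne ∈ KU := by
  simpa only [wP_zero, sub_zero] using uOne_sub_wP_mem_KU 0

/-- `v(0, k) = w₊(k)`, and these converge to `(ζ₂, ζ₃, 0)`. -/
lemma lim_wP_mem_KU : ![zeta2, zeta3, 0] ∈ KU := by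
  have hv (k : ℕ) : vU 0 k = wP k := by
    simp [vU, wM_zero]
  have hlim : Tendsto wP atTop (𝓝 ![zeta2, zeta3, 0]) := by
    rw [tendsto_pi_nhds]
    intro i
    fin_cases i
    · exact tendsto_zetaPartial (p := 2) (by norm_num)
    · exact tendsto_zetaPartial (p := 3) (by norm_num)
    · simp [wP_eq]
  exact mem_closure_of_tendsto hlim (.of_forall fun k =>
    subset_convexHull ℝ _ (.inl (.inl (.inr (Set.mem_iUnion.mpr ⟨0, k, hv k⟩)))))

/-- The triangle with vertices `(ζ₂, ζ₃, 0)`, `u₀` and `u₁` lies in `K`. -/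
lemma mem_KU_of_le {y z : ℝ} (hy : -2 ≤ y) (hz : 0 ≤ z)
    (h : (y + 2) * zeta3 + z * (zeta3 + 2) ≤ zeta3 * (zeta3 + 2)) : ![zeta2, y, z] ∈ KU := by
  have hζ : 0 < zeta3 := by linarith [nine_div_eight_le_zeta3]
  set b := (y + 2) / (zeta3 + 2)
  set d := z / zeta3
  have hbd : b + d ≤ 1 := by
    rw [div_add_div _ _ (by positivity) hζ.ne', div_le_one (by positivity)]
    linarith
  have hmem := convex_KU.smul_add_smul_add_smul_mem zero_mem_KU lim_wP_mem_KU uZero_mem_KU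
    uOne_mem_KU (div_nonneg (by linarith) (by positivity) : 0 ≤ b)
    (by linarith : 0 ≤ 1 - b - d) (div_nonneg hz hζ.le : 0 ≤ d) (by linarith)
  convert hmem using 1
  ext i
  fin_cases i <;> simp [uZero, uOne, b, d] <;> field_simp <;> ring

/-- Points of `K` in the plane `z = ζ₃ - 1`, as combinations of `0`, `u₀`, `u₀ - w₊(k)` and
`u₁ - w₊(k)` with weights `1 - s - w`, `s`, `w - β`, `β` where `β = 1 - 1/ζ₃`. -/
lemma mem_KU_of_weights (k : ℕ) {s w : ℝ} (hs : 0 ≤ s) (hw : 1 - 1 / zeta3 ≤ w)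
    (hsw : s + w ≤ 1) :
    ![s * zeta2 + w * (zeta2 - zetaPartial 2 k), -(2 * s) - w * (2 + zetaPartial 3 k),
      zeta3 - 1] ∈ KU := by
  have hζ : 1 ≤ zeta3 := by linarith [nine_div_eight_le_zeta3]
  have hβ : 0 ≤ 1 - 1 / zeta3 := by
    rw [sub_nonneg]; exact div_le_one_of_le₀ hζ (by linarith)
  have hmem := convex_KU.smul_add_smul_add_smul_mem zero_mem_KU uZero_mem_KU
    (uZero_sub_wP_mem_KU k) (uOne_sub_wP_mem_KU k) hs (by linarith : 0 ≤ w - (1 - 1 / zeta3)) hβ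
    (by linarith)
  convert hmem using 1
  ext i
  fin_cases i <;> simp [uZero, uOne, wP_eq] <;> field_simp <;> ring

lemma exists_weights {z₂ z₃ a a' b b' : ℝ} (hz₂ : z₂ < 1.654) (hz₃ : 9 / 8 ≤ z₃)
    (hz₃' : z₃ < 1.26) (ha : 1 ≤ a) (haz : a ≤ z₂) (ha' : 5 / 4 ≤ a') (ha'z : a' ≤ z₂)
    (hb : 1 ≤ b) (hbz : b ≤ z₃) (hb' : 9 / 8 ≤ b') (hb'z : b' ≤ z₃) :
    ∃ s w : ℝ, 0 ≤ s ∧ 1 - 1 / z₃ ≤ w ∧ s + w ≤ 1 ∧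
      s * z₂ + w * (z₂ - a) = 2 * z₂ - a - a' ∧ 2 * s + w * (2 + b) = b + b' := by
  have hz₂0 : 0 < z₂ := by linarith
  have hD : 0 < 2 * a + z₂ * b := by positivity
  set w := (z₂ * (b + b' - 4) + 2 * (a + a')) / (2 * a + z₂ * b)
  have hw : w * (2 * a + z₂ * b) = z₂ * (b + b' - 4) + 2 * (a + a') := div_mul_cancel₀ _ hD.ne'
  have hw₁ : w ≤ 1 := by
    rw [div_le_one hD]
    nlinarith
  have hwβ : 1 - 1 / z₃ ≤ w := by
    rw [one_sub_div (by positivity), div_le_div_iff₀ (by positivity) hD]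
    nlinarith [mul_le_mul_of_nonneg_left hb' (mul_pos hz₂0 (by positivity : (0 : ℝ) < z₃)).le,
      mul_le_mul_of_nonneg_left ha' (by positivity : (0 : ℝ) ≤ z₃),
      mul_le_mul_of_nonneg_left hz₂.le (by linarith : (0 : ℝ) ≤ 23 / 8 * z₃ - 1)]
  have hwa : w * a ≤ a + a' - z₂ := by
    have key : b * (z₂ - a') ≤ a * (2 - b') := by
      nlinarith [mul_le_mul hbz (by linarith : z₂ - a' ≤ 0.404) (by linarith) (by linarith),
        mul_le_mul ha (by linarith : 0.74 ≤ 2 - b') (by norm_num) (by linarith)]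
    nlinarith
  set s := (2 * z₂ - a - a' - w * (z₂ - a)) / z₂
  have hs : s * z₂ = 2 * z₂ - a - a' - w * (z₂ - a) := div_mul_cancel₀ _ hz₂0.ne'
  refine ⟨s, w, ?_, hwβ, ?_, by linarith, ?_⟩
  · exact div_nonneg (by nlinarith [mul_nonneg (sub_nonneg.2 hw₁) (sub_nonneg.2 haz)]) hz₂0.le
  · refine le_of_mul_le_mul_right ?_ hz₂0
    linarith
  · refine mul_right_cancel₀ hz₂0.ne' ?_
    linear_combination 2 * hs + hw

lemma wM_add_witness_mem_KU {j : ℕ} (hj : 1 ≤ j) : wM j + ![zeta2, 2, -1] ∈ KU := by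
  have hζ₃ := nine_div_eight_le_zeta3
  have hS2 : zetaPartial 2 j ≤ zeta2 := zetaPartial_le_zetaNat (by norm_num) j
  have hS3 : 1 ≤ zetaPartial 3 j := one_le_zetaPartial hj
  have hmax := weighted_zetaPartial_le zeta3 (by linarith) (by linarith [zeta3_lt]) j
  rw [zetaPartial_two, zetaPartial_two] at hmax
  have hpt : wM j + ![zeta2, 2, -1] = ![zeta2, 2 - zetaPartial 2 j, zetaPartial 3 j - 1] := by
    ext i; fin_cases i <;> simp [wM_eq] <;> ring
  rw [hpt]
  refine mem_KU_of_le (by linarith [zeta2_lt]) (by linarith) ?_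
  nlinarith

lemma witness_sub_mem_KU {k : ℕ} (hk : 1 ≤ k) :
    -(wP k + wP (k + 1) - uOne) + ![zeta2, 2, -1] ∈ KU := by
  have hζ₂ : ∀ n, zetaPartial 2 n ≤ zeta2 := zetaPartial_le_zetaNat (by norm_num)
  have hζ₃ : ∀ n, zetaPartial 3 n ≤ zeta3 := zetaPartial_le_zetaNat (by norm_num)
  have h₂ := zetaPartial_two 2
  have h₃ := zetaPartial_two 3
  obtain ⟨s, w, hs, hw, hsw, hx, hy⟩ := exists_weights zeta2_lt nine_div_eight_le_zeta3 zeta3_lt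
    (one_le_zetaPartial hk) (hζ₂ k) (by linarith [zetaPartial_mono 2 (by omega : 2 ≤ k + 1)])
    (hζ₂ (k + 1)) (one_le_zetaPartial hk) (hζ₃ k)
    (by linarith [zetaPartial_mono 3 (by omega : 2 ≤ k + 1)]) (hζ₃ (k + 1))
  convert mem_KU_of_weights k hs hw hsw using 1
  ext i; fin_cases i <;> simp [wP_eq, uOne] <;> linarith

/-- **Witness point for `⋂ B_j ∩ ⋂ C_k`.** For all `j, k ≥ 1`, the point
`(ζ₂, 2, −1)` lies both in `K + (−w₋(j))` and in `K + (w₊(k) + w₊(k+1) − u₁)`. -/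
theorem witness_B_C (j k : ℕ) (hj : 1 ≤ j) (hk : 1 ≤ k) :
    ![zeta2, (2 : ℝ), -1] ∈ (-(wM j)) +ᵥ KU ∧
    ![zeta2, (2 : ℝ), -1] ∈ (wP k + wP (k + 1) - uOne) +ᵥ KU := by
  simp only [Set.mem_vadd_set_iff_neg_vadd_mem, vadd_eq_add, neg_neg]
  exact ⟨wM_add_witness_mem_KU hj, witness_sub_mem_KU hk⟩
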